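/- Let n > 2 and 0 < β < (n−2)²/4, and suppose l satisfies 2_*(β) < l < 2^*. Define L := 2(l(n−1) − 2n)/(l(n−2) − 2n + 2), equivalently L = 2 − 2/γ_l. Then 2^* < L < I(β); moreover α_L = −γ_l and γ_L = −α_l, where α_l = 2/(l−2) and γ_l = α_l + 2 − n. In other words, Kelvin inversion sends an exponent l in the Hardy-subcritical range (2_*(β), 2^*) to an exponent L in the Hardy-supercritical range (2^*, I(β)). -/
import Mathlib


open Real Filter Set MeasureTheory Topology Pointwise

noncomputable section

namespace IndefiniteHardy

/-- `α_l = 2/(l-2)`. -/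
def alphal (l : ℝ) : ℝ := 2 / (l - 2)

/-- `γ_l = α_l + 2 - n`. -/
def gammal (n l : ℝ) : ℝ := alphal l + 2 - n

/-- The Sobolev critical exponent `2^* = 2n/(n-2)`. -/
def sobolev (n : ℝ) : ℝ := 2 * n / (n - 2)

/-- The (shifted) Serrin critical exponent `2_*(η)`. -/
def serrin (n η : ℝ) : ℝ :=
  2 * (n + Real.sqrt ((n - 2) ^ 2 - 4 * η)) / (n - 2 + Real.sqrt ((n - 2) ^ 2 - 4 * η))

/-- The relation `l < I(η)`, where `I(η) = +∞` for `η ≤ 0` and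
`I(η) = 2(n - √((n-2)²-4η))/(n - 2 - √((n-2)²-4η))` for `0 < η < (n-2)²/4`. -/
def ltI (n η l : ℝ) : Prop :=
  η ≤ 0 ∨ l < 2 * (n - Real.sqrt ((n - 2) ^ 2 - 4 * η)) /
    (n - 2 - Real.sqrt ((n - 2) ^ 2 - 4 * η))

/-- `κ(η) = ((n-2) - √((n-2)² - 4η))/2`. -/
def kappa (n η : ℝ) : ℝ := ((n - 2) - Real.sqrt ((n - 2) ^ 2 - 4 * η)) / 2

/-- `l(q, δ) = 2(q + δ)/(2 + δ)`. -/
def ldelta (q δ : ℝ) : ℝ := 2 * (q + δ) / (2 + δ)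

/-- `g_l(x,t) = f(x e^{-α_l t}, e^t) e^{(α_l + 2) t}`. -/
def gl (l : ℝ) (f : ℝ → ℝ → ℝ) (x t : ℝ) : ℝ :=
  f (x * Real.exp (-alphal l * t)) (Real.exp t) * Real.exp ((alphal l + 2) * t)

/-- The Fowler transform `(x_l(t), y_l(t)) = (u(e^t) e^{α_l t}, u'(e^t) e^{(α_l+1) t})`. -/
def fowlerPt (l : ℝ) (u u' : ℝ → ℝ) (t : ℝ) : ℝ × ℝ :=
  (u (Real.exp t) * Real.exp (alphal l * t), u' (Real.exp t) * Real.exp ((alphal l + 1) * t))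

/-- Hypothesis **H** on the Hardy potential. -/
structure HypH (n : ℝ) (h : ℝ → ℝ) (η β : ℝ) : Prop where
  bound : ∀ r > 0, h r < (n - 2) ^ 2 / 4
  eta_lt : η < (n - 2) ^ 2 / 4
  lim_zero : Tendsto h (nhdsWithin 0 (Ioi 0)) (nhds η)
  int_zero : IntegrableOn (fun r => (h r - η) / r) (Ioc 0 1)
  beta_lt : β < (n - 2) ^ 2 / 4
  lim_top : Tendsto h atTop (nhds β)
  int_top : IntegrableOn (fun r => (h r - β) / r) (Ici 1)

/-- Assumption **GA** for the `t`-independent part of the nonlinearity. -/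
structure HypGA (g : ℝ → ℝ) : Prop where
  pos_pos : ∀ x > 0, 0 < g x / x
  mono : MonotoneOn (fun x => g x / x) (Ioi 0)
  pos_neg : ∀ x < 0, 0 < g x / x
  anti : AntitoneOn (fun x => g x / x) (Iio 0)
  lim_zero : Tendsto (fun x => g x / x) (nhdsWithin 0 {x : ℝ | x ≠ 0}) (nhds 0)
  lim_top : Tendsto (fun x => g x / x) atTop atTop
  lim_bot : Tendsto (fun x => g x / x) atBot atTop

/-- Hypothesis **Gs**. -/
structure HypGs (n : ℝ) (h : ℝ → ℝ) (f : ℝ → ℝ → ℝ) (η β K ls ϖ : ℝ) (ginf : ℝ → ℝ) :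
    Prop where
  hypH : HypH n h η β
  K_ne : K ≠ 0
  ls_gt : serrin n β < ls
  ls_lt : ltI n β ls
  varpi_pos : 0 < ϖ
  g_zero : ∀ t : ℝ, gl ls f 0 t = 0
  dg_zero : ∀ t : ℝ, HasDerivAt (fun x => gl ls f x t) 0 0
  nontrivial : ginf ≠ 0
  locLip : LocallyLipschitz ginf
  ga : HypGA ginf
  conv : ∀ C : Set ℝ, IsCompact C →
    TendstoUniformlyOn (fun t x => gl ls f x t) (fun x => K * ginf x) atTop C
  conv_dt : ∀ C : Set ℝ, IsCompact C →
    TendstoUniformlyOn (fun t x => Real.exp (ϖ * t) * deriv (fun s => gl ls f x s) t)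
      (fun _ => 0) atTop C

/-- Hypothesis **Gu**. -/
structure HypGu (n : ℝ) (h : ℝ → ℝ) (f : ℝ → ℝ → ℝ) (η β K lu ϖ : ℝ) (ginf : ℝ → ℝ) :
    Prop where
  hypH : HypH n h η β
  K_ne : K ≠ 0
  lu_gt : serrin n η < lu
  lu_lt : ltI n η lu
  varpi_pos : 0 < ϖ
  g_zero : ∀ t : ℝ, gl lu f 0 t = 0
  dg_zero : ∀ t : ℝ, HasDerivAt (fun x => gl lu f x t) 0 0
  nontrivial : ginf ≠ 0
  locLip : LocallyLipschitz ginf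
  ga : HypGA ginf
  conv : ∀ C : Set ℝ, IsCompact C →
    TendstoUniformlyOn (fun t x => gl lu f x t) (fun x => K * ginf x) atBot C
  conv_dt : ∀ C : Set ℝ, IsCompact C →
    TendstoUniformlyOn (fun t x => Real.exp (-ϖ * t) * deriv (fun s => gl lu f x s) t)
      (fun _ => 0) atBot C

/-- Hypothesis **gu**. -/
structure Hypgu (n : ℝ) (h : ℝ → ℝ) (f : ℝ → ℝ → ℝ) (η β lu : ℝ) : Prop where
  hypH : HypH n h η β
  lu_gt : serrin n η < lu
  lu_lt : ltI n η lu
  unif_cont : ∀ τ : ℝ, ∀ C : Set ℝ, IsCompact C → ∀ ε > 0, ∃ δ > 0,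
    ∀ x₁ ∈ C, ∀ x₂ ∈ C, |x₁ - x₂| < δ → ∀ t ≤ τ, |gl lu f x₁ t - gl lu f x₂ t| ≤ ε
  g_zero : ∀ t : ℝ, gl lu f 0 t = 0
  dg_zero : ∀ t : ℝ, HasDerivAt (fun x => gl lu f x t) 0 0

/-- Hypothesis **gs**. -/
structure Hypgs (n : ℝ) (h : ℝ → ℝ) (f : ℝ → ℝ → ℝ) (η β ls : ℝ) : Prop where
  hypH : HypH n h η β
  ls_gt : serrin n β < ls
  ls_lt : ltI n β ls
  unif_cont : ∀ τ : ℝ, ∀ C : Set ℝ, IsCompact C → ∀ ε > 0, ∃ δ > 0,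
    ∀ x₁ ∈ C, ∀ x₂ ∈ C, |x₁ - x₂| < δ → ∀ t, τ ≤ t → |gl ls f x₁ t - gl ls f x₂ t| ≤ ε
  g_zero : ∀ t : ℝ, gl ls f 0 t = 0
  dg_zero : ∀ t : ℝ, HasDerivAt (fun x => gl ls f x t) 0 0

/-- Hypothesis **L1**. -/
structure HypL1 (f : ℝ → ℝ → ℝ) (lu ls Tfrak : ℝ) : Prop where
  neg_u : ∀ x : ℝ, x ≠ 0 → ∀ t < Tfrak, gl lu f x t / x ≤ 0
  liminf_s : ∀ t > Tfrak, ∀ ε > 0, ∃ M : ℝ, ∀ x : ℝ, M ≤ |x| → -ε ≤ gl ls f x t / x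

/-- Hypothesis **L2**. -/
structure HypL2 (f : ℝ → ℝ → ℝ) (lu ls Tfrak : ℝ) : Prop where
  neg_s : ∀ x : ℝ, x ≠ 0 → ∀ t > Tfrak, gl ls f x t / x ≤ 0
  liminf_u : ∀ t < Tfrak, ∀ ε > 0, ∃ M : ℝ, ∀ x : ℝ, M ≤ |x| → -ε ≤ gl lu f x t / x

/-- Hypothesis **K** on the weight. -/
structure HypK (K : ℝ → ℝ) (K0 Kinf δ0 δinf R ϖ : ℝ) : Prop where
  smooth : ContDiffOn ℝ 1 K (Ioi 0)
  R_pos : 0 < R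
  neg_in : ∀ r : ℝ, 0 < r → r < R → K r < 0
  pos_out : ∀ r : ℝ, R < r → 0 < K r
  K0_neg : K0 < 0
  Kinf_pos : 0 < Kinf
  δ0_gt : -2 < δ0
  δinf_gt : -2 < δinf
  asymp_zero : Tendsto (fun r : ℝ => K r / r ^ δ0) (nhdsWithin 0 (Ioi 0)) (nhds K0)
  asymp_top : Tendsto (fun r : ℝ => K r / r ^ δinf) atTop (nhds Kinf)
  varpi_pos : 0 < ϖ
  dasymp_zero : Tendsto (fun r : ℝ => r ^ (-ϖ) * deriv (fun s : ℝ => K s * s ^ (-δ0)) r)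
    (nhdsWithin 0 (Ioi 0)) (nhds 0)
  dasymp_top : Tendsto (fun r : ℝ => r ^ ϖ * deriv (fun s : ℝ => K s * s ^ (-δinf)) r)
    atTop (nhds 0)

/-- `(u, u')` solves equation (Hr) on the set `S`. -/
def SolHr (n : ℝ) (h : ℝ → ℝ) (f : ℝ → ℝ → ℝ) (u u' : ℝ → ℝ) (S : Set ℝ) : Prop :=
  ∀ r ∈ S, HasDerivWithinAt u (u' r) S r ∧
    HasDerivWithinAt u' (-((n - 1) / r * u' r + h r / r ^ 2 * u r + f (u r) r)) S r

/-- `u` is an R-solution with value `d`: `u(r) r^{κ(η)} → d` as `r → 0⁺`. -/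
def RVal (n η : ℝ) (u : ℝ → ℝ) (d : ℝ) : Prop :=
  Tendsto (fun r : ℝ => u r * r ^ kappa n η) (nhdsWithin 0 (Ioi 0)) (nhds d)

/-- `u` is an S-solution: `u(r) r^{κ(η)} → ±∞` as `r → 0⁺`. -/
def SSol (n η : ℝ) (u : ℝ → ℝ) : Prop :=
  Tendsto (fun r : ℝ => u r * r ^ kappa n η) (nhdsWithin 0 (Ioi 0)) atTop ∨
  Tendsto (fun r : ℝ => u r * r ^ kappa n η) (nhdsWithin 0 (Ioi 0)) atBot

/-- `u` is a fast-decay solution with value `L`: `u(r) r^{n-2-κ(β)} → L` as `r → ∞`. -/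
def FdVal (n β : ℝ) (u : ℝ → ℝ) (L : ℝ) : Prop :=
  Tendsto (fun r : ℝ => u r * r ^ (n - 2 - kappa n β)) atTop (nhds L)

/-- `u` is a slow-decay solution: `u(r) r^{n-2-κ(β)} → ±∞` as `r → ∞`. -/
def SdSol (n β : ℝ) (u : ℝ → ℝ) : Prop :=
  Tendsto (fun r : ℝ => u r * r ^ (n - 2 - kappa n β)) atTop atTop ∨
  Tendsto (fun r : ℝ => u r * r ^ (n - 2 - kappa n β)) atTop atBot

/-- `u` has exactly `k` zeros in `(0, ∞)`, all of them nondegenerate. -/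
def NondegZeros (u u' : ℝ → ℝ) (k : ℕ) : Prop :=
  ∃ Z : Finset ℝ, Z.card = k ∧ (∀ r ∈ Z, 0 < r ∧ u r = 0 ∧ u' r ≠ 0) ∧
    ∀ r : ℝ, 0 < r → u r = 0 → r ∈ Z

/-- intervals of the form `(0, ϱ)` with `ϱ ∈ (0, +∞]`. -/
def ZeroInterval (S : Set ℝ) : Prop := S = Ioi (0 : ℝ) ∨ ∃ ρ > (0 : ℝ), S = Ioo 0 ρ

/-- intervals of the form `(ϱ̄, +∞)` with `ϱ̄ ∈ [0, +∞)`. -/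
def TopInterval (S : Set ℝ) : Prop := ∃ ρ : ℝ, 0 ≤ ρ ∧ S = Ioi ρ

/-- the family `d ↦ u(·, d)` of (unique, maximally defined) R-solutions of (Hr). -/
structure RFamily (n : ℝ) (h : ℝ → ℝ) (f : ℝ → ℝ → ℝ) (η : ℝ)
    (U U' : ℝ → ℝ → ℝ) (dom : ℝ → Set ℝ) : Prop where
  interval : ∀ d, ZeroInterval (dom d)
  sol : ∀ d, SolHr n h f (U d) (U' d) (dom d)
  rval : ∀ d, RVal n η (U d) d
  maximal : ∀ d (u u' : ℝ → ℝ) (S : Set ℝ), ZeroInterval S →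
    SolHr n h f u u' S → RVal n η u d → S ⊆ dom d ∧ EqOn u (U d) S

/-- the family `L ↦ v(·, L)` of (unique, maximally defined) fast-decay solutions of (Hr). -/
structure FdFamily (n : ℝ) (h : ℝ → ℝ) (f : ℝ → ℝ → ℝ) (β : ℝ)
    (V V' : ℝ → ℝ → ℝ) (dom : ℝ → Set ℝ) : Prop where
  interval : ∀ L, TopInterval (dom L)
  sol : ∀ L, SolHr n h f (V L) (V' L) (dom L)
  fdval : ∀ L, FdVal n β (V L) L
  maximal : ∀ L (u u' : ℝ → ℝ) (S : Set ℝ), TopInterval S →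
    SolHr n h f u u' S → FdVal n β u L → S ⊆ dom L ∧ EqOn u (V L) S

/-- solutions of the Fowler system (S) on the set `S`. -/
def SolS (n l : ℝ) (h : ℝ → ℝ) (g : ℝ → ℝ → ℝ) (x y : ℝ → ℝ) (S : Set ℝ) : Prop :=
  ∀ t ∈ S, HasDerivWithinAt x (alphal l * x t + y t) S t ∧
    HasDerivWithinAt y (-(h (Real.exp t)) * x t + gammal n l * y t - g (x t) t) S t

/-- `W̃^u_l(τ)`: initial data at time `τ` of trajectories converging to the origin
as `t → -∞`. -/
def WtildeU (n l : ℝ) (h : ℝ → ℝ) (g : ℝ → ℝ → ℝ) (τ : ℝ) : Set (ℝ × ℝ) :=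
  {Q | ∃ x y : ℝ → ℝ, SolS n l h g x y (Iic τ) ∧ x τ = Q.1 ∧ y τ = Q.2 ∧
    Tendsto (fun t => (x t, y t)) atBot (nhds (0, 0))}

/-- `W̃^s_l(τ)`: initial data at time `τ` of trajectories converging to the origin
as `t → +∞`. -/
def WtildeS (n l : ℝ) (h : ℝ → ℝ) (g : ℝ → ℝ → ℝ) (τ : ℝ) : Set (ℝ × ℝ) :=
  {Q | ∃ x y : ℝ → ℝ, SolS n l h g x y (Ici τ) ∧ x τ = Q.1 ∧ y τ = Q.2 ∧
    Tendsto (fun t => (x t, y t)) atTop (nhds (0, 0))}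

/-- `W^u_l(τ)`: the connected component of `W̃^u_l(τ)` containing the origin. -/
def Wu (n l : ℝ) (h : ℝ → ℝ) (g : ℝ → ℝ → ℝ) (τ : ℝ) : Set (ℝ × ℝ) :=
  connectedComponentIn (WtildeU n l h g τ) 0

/-- `W^s_l(τ)`: the connected component of `W̃^s_l(τ)` containing the origin. -/
def Ws (n l : ℝ) (h : ℝ → ℝ) (g : ℝ → ℝ → ℝ) (τ : ℝ) : Set (ℝ × ℝ) :=
  connectedComponentIn (WtildeS n l h g τ) 0

/-- `W` is a one-dimensional immersed manifold: the image of an injective immersed curve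
defined on an interval of `ℝ`. -/
def IsImmersedCurve (W : Set (ℝ × ℝ)) : Prop :=
  ∃ (I : Set ℝ) (γ : ℝ → ℝ × ℝ), I.Nonempty ∧ I.OrdConnected ∧ InjOn γ I ∧ γ '' I = W ∧
    ∀ t ∈ I, ∃ v : ℝ × ℝ, v ≠ 0 ∧ HasDerivWithinAt γ v I t

/-- the line `{(x, m·x)}` is tangent at the origin to `W`. -/
def TangentSlopeAtOrigin (W : Set (ℝ × ℝ)) (m : ℝ) : Prop :=
  Tendsto (fun Q : ℝ × ℝ => Q.2 / Q.1) (nhdsWithin 0 (W \ {0})) (nhds m)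

/-- `B` is the branch of `W` leaving the origin and entering `{x > 0}`. -/
def BranchPlus (W B : Set (ℝ × ℝ)) : Prop :=
  (∃ Q ∈ W \ {(0 : ℝ × ℝ)}, B = connectedComponentIn (W \ {(0 : ℝ × ℝ)}) Q) ∧
    (0 : ℝ × ℝ) ∈ closure B ∧ ∀ᶠ Q in nhdsWithin (0 : ℝ × ℝ) B, 0 < Q.1

/-- `B` is the branch of `W` leaving the origin and entering `{x < 0}`. -/
def BranchMinus (W B : Set (ℝ × ℝ)) : Prop :=
  (∃ Q ∈ W \ {(0 : ℝ × ℝ)}, B = connectedComponentIn (W \ {(0 : ℝ × ℝ)}) Q) ∧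
    (0 : ℝ × ℝ) ∈ closure B ∧ ∀ᶠ Q in nhdsWithin (0 : ℝ × ℝ) B, Q.1 < 0

/-- a closed set diffeomorphic to a full triangle, with vertices `O, A, B` and
(open) opposite edges `o, a, b`. -/
def CurvedTriangle (T : Set (ℝ × ℝ)) (O A B : ℝ × ℝ) (o a b : Set (ℝ × ℝ)) : Prop :=
  IsClosed T ∧ ∃ (φ : (ℝ × ℝ) ≃ₜ (ℝ × ℝ)) (P₀ P₁ P₂ : ℝ × ℝ),
    ContDiff ℝ (⊤ : ℕ∞) ⇑φ ∧ ContDiff ℝ (⊤ : ℕ∞) ⇑φ.symm ∧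
    ¬ Collinear ℝ ({P₀, P₁, P₂} : Set (ℝ × ℝ)) ∧
    φ '' convexHull ℝ ({P₀, P₁, P₂} : Set (ℝ × ℝ)) = T ∧
    φ P₀ = O ∧ φ P₁ = A ∧ φ P₂ = B ∧
    φ '' openSegment ℝ P₁ P₂ = o ∧ φ '' openSegment ℝ P₀ P₂ = a ∧
    φ '' openSegment ℝ P₀ P₁ = b

/-- the vector field `F(·, t)` points towards the interior of `T` at `P`. -/
def PointsInto (F : ℝ × ℝ → ℝ → ℝ × ℝ) (T : Set (ℝ × ℝ)) (P : ℝ × ℝ) (t : ℝ) : Prop :=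
  ∃ ε > 0, ∀ s : ℝ, 0 < s → s < ε → P + s • F P t ∈ interior T

/-- the vector field `F(·, t)` points towards the exterior of `T` at `P`. -/
def PointsOut (F : ℝ × ℝ → ℝ → ℝ × ℝ) (T : Set (ℝ × ℝ)) (P : ℝ × ℝ) (t : ℝ) : Prop :=
  ∃ ε > 0, ∀ s : ℝ, 0 < s → s < ε → P + s • F P t ∉ T

/-- **Kelvin inversion of the exponents**: for `0 < β < (n-2)²/4` and
`2_*(β) < l < 2^*`, the exponent `L = 2(l(n-1) - 2n)/(l(n-2) - 2n + 2) = 2 - 2/γ_l`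
satisfies `2^* < L < I(β)`, with `α_L = -γ_l` and `γ_L = -α_l`. -/
theorem kelvin_exponent_swap
    (n : ℝ) (hn : 2 < n) (β : ℝ) (hβ0 : 0 < β) (hβ : β < (n - 2) ^ 2 / 4)
    (l : ℝ) (hl1 : serrin n β < l) (hl2 : l < sobolev n)
    (L : ℝ) (hL : L = 2 * (l * (n - 1) - 2 * n) / (l * (n - 2) - 2 * n + 2)) :
    L = 2 - 2 / gammal n l ∧
    sobolev n < L ∧ ltI n β L ∧
    alphal L = -(gammal n l) ∧ gammal n L = -(alphal l) := by
  have hn2 : (0:ℝ) < n - 2 := by linarith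
  set s := Real.sqrt ((n - 2) ^ 2 - 4 * β) with hs
  have hpos : (0:ℝ) < (n - 2) ^ 2 - 4 * β := by nlinarith
  have hs2 : s ^ 2 = (n - 2) ^ 2 - 4 * β := Real.sq_sqrt (le_of_lt hpos)
  have hs0 : 0 < s := Real.sqrt_pos.mpr hpos
  have hsn : s < n - 2 := by nlinarith
  -- from hl1
  have hden1 : (0:ℝ) < n - 2 + s := by linarith
  have h1 : 2 * (n + s) < l * (n - 2 + s) := by
    have := hl1
    unfold serrin at this
    rw [← hs] at this
    rw [div_lt_iff₀ hden1] at this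
    linarith
  have h2 : l * (n - 2) < 2 * n := by
    have := hl2
    unfold sobolev at this
    rw [lt_div_iff₀ hn2] at this
    linarith
  have hl2pos : (0:ℝ) < l - 2 := by nlinarith
  have hD : (0:ℝ) < l * (n - 2) - 2 * n + 2 := by nlinarith
  have hγ : gammal n l = -(l * (n - 2) - 2 * n + 2) / (l - 2) := by
    unfold gammal alphal
    field_simp
    ring
  have hγneg : gammal n l < 0 := by
    rw [hγ]
    apply div_neg_of_neg_of_pos <;> linarith
  have hγne : gammal n l ≠ 0 := ne_of_lt hγneg
  have hDne : l * (n - 2) - 2 * n + 2 ≠ 0 := ne_of_gt hD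
  have hne : -(l * (n - 2) - 2 * n + 2) ≠ 0 := neg_ne_zero.mpr hDne
  have part1 : L = 2 - 2 / gammal n l := by
    rw [hL, hγ, div_div_eq_mul_div, div_neg]
    field_simp
    ring
  have part2 : sobolev n < L := by
    rw [hL]
    unfold sobolev
    rw [div_lt_div_iff₀ hn2 hD]
    nlinarith
  have part3 : ltI n β L := by
    right
    rw [← hs, hL]
    have hden2 : (0:ℝ) < n - 2 - s := by linarith
    rw [div_lt_div_iff₀ hD hden2]
    nlinarith
  have part4 : alphal L = -(gammal n l) := by
    unfold alphal
    rw [part1]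
    field_simp
    ring
  refine ⟨part1, part2, part3, part4, ?_⟩
  unfold gammal at part4 ⊢
  linarith
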